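/- arXiv:2005.04801 — 2 statements merged into one kernel-verified Lean document; each statement's English description precedes it below -/
import Mathlib

section
/- For every d ∈ {0, 1, 2} and every natural number n, A(d + 3n) ≡ A(d)·A(n) (mod 9), where A denotes the Apéry numbers. -/
def apery (n : ℕ) : ℕ := ∑ k ∈ Finset.range (n + 1), (n.choose k)^2 * ((n + k).choose k)^2

/-!
Modulo 9, `(1 + X)^3 = (1 + X^3) + 3(X + X^2)` with a square-zero second summand, so
`(1 + X)^(3m) ≡ (1 + X^3)^m + 3m (X + X^2)(1 + X^3)^(m-1)`. Reading off coefficients expresses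
`C(3m, k) mod 9` through binomial coefficients of `m`, and Pascal's rule extends this to
`C(3m + d, k)` for `d ≤ 2`. Split the sum defining `A(3n + d)` into blocks
`k = 3j, 3j + 1, 3j + 2`: a summand with a binomial coefficient divisible by 3 vanishes since
it enters squared, and each block sums to `A(d) (C(n, j) C(n + j, j))^2`.
-/

open Polynomial Finset

theorem Nat.cast_add_one_mul_choose_add_one {R : Type*} [CommRing R] (m j : ℕ) :
    ((j : R) + 1) * (m.choose (j + 1) : R) = ((m : R) - j) * m.choose j := by
  rcases le_or_gt j m with hjm | hmj
  · have h : (j + 1) * m.choose (j + 1) = (m - j) * m.choose j := by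
      rw [mul_comm, Nat.choose_succ_right_eq, mul_comm]
    rw [← Nat.cast_sub hjm]
    exact_mod_cast congrArg (Nat.cast : ℕ → R) h
  · simp [Nat.choose_eq_zero_of_lt hmj, Nat.choose_eq_zero_of_lt (Nat.lt_succ_of_lt hmj)]

theorem coeff_X_pow_three_add_one_pow {R : Type*} [CommSemiring R] (m k : ℕ) :
    ((X ^ 3 + 1 : R[X]) ^ m).coeff k = if 3 ∣ k then (m.choose (k / 3) : R) else 0 := by
  rw [show (X ^ 3 + 1 : R[X]) = expand R 3 (X + 1) by simp, ← map_pow,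
    coeff_expand three_pos, coeff_X_add_one_pow]

theorem coeff_X_add_X_sq_mul_X_pow_three_add_one_pow {R : Type*} [CommSemiring R] (m k : ℕ) :
    ((X + X ^ 2) * (X ^ 3 + 1 : R[X]) ^ m).coeff k =
      if 3 ∣ k then 0 else (m.choose (k / 3) : R) := by
  nth_rw 1 [← pow_one (X : R[X])]
  rw [add_mul, coeff_add, coeff_X_pow_mul', coeff_X_pow_mul',
    coeff_X_pow_three_add_one_pow, coeff_X_pow_three_add_one_pow]
  split_ifs <;> first | omega | simp
  all_goals congr 2; omega

theorem add_pow_succ_of_sq_eq_zero {R : Type*} [CommSemiring R] {a b : R} (hb : b ^ 2 = 0)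
    (m : ℕ) : (a + b) ^ (m + 1) = a ^ (m + 1) + (m + 1) * a ^ m * b := by
  simpa using eval_add_of_sq_eq_zero (X ^ (m + 1)) a b hb

theorem X_add_one_pow_three_mul_succ (m : ℕ) :
    (X + 1 : (ZMod 9)[X]) ^ (3 * (m + 1)) =
      (X ^ 3 + 1) ^ (m + 1) + C (3 * (m + 1) : ZMod 9) * ((X + X ^ 2) * (X ^ 3 + 1) ^ m) := by
  have h9 : ((9 : ℕ) : (ZMod 9)[X]) = 0 := CharP.cast_eq_zero _ 9
  have hsq : (3 * (X + X ^ 2) : (ZMod 9)[X]) ^ 2 = 0 := by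
    linear_combination (X + X ^ 2) ^ 2 * h9
  rw [pow_mul, show (X + 1 : (ZMod 9)[X]) ^ 3 = X ^ 3 + 1 + 3 * (X + X ^ 2) by ring,
    add_pow_succ_of_sq_eq_zero hsq]
  simp only [map_mul, map_add, map_one, map_natCast, map_ofNat]
  ring

theorem natCast_choose_three_mul (m k : ℕ) :
    ((3 * m).choose k : ZMod 9) = if 3 ∣ k then (m.choose (k / 3) : ZMod 9)
      else 3 * (((k / 3 : ℕ) + 1) * m.choose (k / 3 + 1)) := by
  cases m with
  | zero =>
    rcases k with _ | k
    · simp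
    · split_ifs with h
      · simp [Nat.choose_eq_zero_of_lt (by omega : 0 < (k + 1) / 3)]
      · simp
  | succ m =>
    rw [← coeff_X_add_one_pow, X_add_one_pow_three_mul_succ, coeff_add, coeff_C_mul,
      coeff_X_pow_three_add_one_pow, coeff_X_add_X_sq_mul_X_pow_three_add_one_pow]
    split_ifs
    · simp
    · have h := congrArg (Nat.cast : ℕ → ZMod 9) (Nat.add_one_mul_choose_eq m (k / 3))
      push_cast at h
      rw [zero_add, mul_assoc, h]
      ring

theorem natCast_choose_three_mul_three_mul (m j : ℕ) :
    ((3 * m).choose (3 * j) : ZMod 9) = m.choose j := by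
  simp [natCast_choose_three_mul]

theorem natCast_choose_three_mul_three_mul_add (m j r : ℕ) (hr₀ : 0 < r) (hr₃ : r < 3) :
    ((3 * m).choose (3 * j + r) : ZMod 9) = 3 * ((j + 1) * m.choose (j + 1)) := by
  rw [natCast_choose_three_mul, if_neg (by omega), show (3 * j + r) / 3 = j by omega]

theorem natCast_choose_three_mul_add_one_three_mul (m j : ℕ) :
    ((3 * m + 1).choose (3 * j) : ZMod 9) = (1 + 3 * j) * m.choose j := by
  rcases j with _ | j
  · simp
  · rw [show 3 * (j + 1) = 3 * j + 2 + 1 by ring, Nat.choose_succ_succ', Nat.cast_add,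
      natCast_choose_three_mul_three_mul_add _ _ _ two_pos (by norm_num),
      show 3 * j + 2 + 1 = 3 * (j + 1) by ring, natCast_choose_three_mul_three_mul]
    push_cast
    ring

theorem natCast_choose_three_mul_add_one_three_mul_add_one (m j : ℕ) :
    ((3 * m + 1).choose (3 * j + 1) : ZMod 9) = (1 + 3 * ((m : ZMod 9) - j)) * m.choose j := by
  rw [Nat.choose_succ_succ', Nat.cast_add, natCast_choose_three_mul_three_mul,
    natCast_choose_three_mul_three_mul_add _ _ _ one_pos (by norm_num),
    Nat.cast_add_one_mul_choose_add_one]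
  ring

theorem natCast_choose_three_mul_add_one_three_mul_add_two (m j : ℕ) :
    ((3 * m + 1).choose (3 * j + 2) : ZMod 9) = 3 * (2 * ((j + 1) * m.choose (j + 1))) := by
  rw [Nat.choose_succ_succ', Nat.cast_add, show 3 * j + 1 + 1 = 3 * j + 2 from rfl,
    natCast_choose_three_mul_three_mul_add _ _ _ one_pos (by norm_num),
    natCast_choose_three_mul_three_mul_add _ _ _ two_pos (by norm_num)]
  ring

theorem natCast_choose_three_mul_add_two_three_mul (m j : ℕ) :
    ((3 * m + 2).choose (3 * j) : ZMod 9) = m.choose j := by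
  rcases j with _ | j
  · simp
  · rw [show 3 * (j + 1) = 3 * j + 2 + 1 by ring, Nat.choose_succ_succ', Nat.cast_add,
      natCast_choose_three_mul_add_one_three_mul_add_two,
      show 3 * j + 2 + 1 = 3 * (j + 1) by ring, natCast_choose_three_mul_add_one_three_mul]
    push_cast
    linear_combination (j + 1 : ZMod 9) * m.choose (j + 1) * ZMod.natCast_self 9

theorem natCast_choose_three_mul_add_two_three_mul_add_one (m j : ℕ) :
    ((3 * m + 2).choose (3 * j + 1) : ZMod 9) = (2 + 3 * m) * m.choose j := by
  rw [Nat.choose_succ_succ', Nat.cast_add, natCast_choose_three_mul_add_one_three_mul,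
    natCast_choose_three_mul_add_one_three_mul_add_one]
  ring

theorem sq_three_mul_eq_zero (t : ZMod 9) : (3 * t) ^ 2 = 0 := by
  linear_combination t ^ 2 * ZMod.natCast_self 9

def aperyTerm (n k : ℕ) : ℕ := n.choose k ^ 2 * (n + k).choose k ^ 2

theorem natCast_aperyTerm {R : Type*} [Semiring R] (n k : ℕ) :
    (aperyTerm n k : R) = (n.choose k : R) ^ 2 * ((n + k).choose k : R) ^ 2 := by
  simp [aperyTerm]

theorem apery_eq_sum_range {n N : ℕ} (h : n < N) :
    apery n = ∑ k ∈ range N, aperyTerm n k := by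
  refine sum_subset (range_subset_range.2 h) fun k _ hk => ?_
  simp [Nat.choose_eq_zero_of_lt (not_lt.1 (mt mem_range.2 hk))]

theorem sum_range_mul_eq_sum_sum {M : Type*} [AddCommMonoid M] (f : ℕ → M) (b n : ℕ) :
    ∑ k ∈ range (b * n), f k = ∑ j ∈ range n, ∑ e ∈ range b, f (b * j + e) := by
  induction n with
  | zero => simp
  | succ n ih => rw [Nat.mul_succ, sum_range_add, ih, sum_range_succ]

theorem sum_aperyTerm_three_mul (m j : ℕ) :
    ∑ e ∈ range 3, (aperyTerm (3 * m) (3 * j + e) : ZMod 9) = aperyTerm m j := by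
  simp only [sum_range_succ, sum_range_zero, zero_add, add_zero, natCast_aperyTerm]
  rw [show 3 * m + 3 * j = 3 * (m + j) by ring, natCast_choose_three_mul_three_mul,
    natCast_choose_three_mul_three_mul,
    natCast_choose_three_mul_three_mul_add _ _ _ one_pos (by norm_num),
    natCast_choose_three_mul_three_mul_add _ _ _ two_pos (by norm_num), sq_three_mul_eq_zero]
  ring

theorem sum_aperyTerm_three_mul_add_one (m j : ℕ) :
    ∑ e ∈ range 3, (aperyTerm (3 * m + 1) (3 * j + e) : ZMod 9) = 5 * aperyTerm m j := by
  simp only [sum_range_succ, sum_range_zero, zero_add, add_zero, natCast_aperyTerm]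
  rw [show 3 * m + 1 + 3 * j = 3 * (m + j) + 1 by ring,
    show 3 * m + 1 + (3 * j + 1) = 3 * (m + j) + 2 by ring,
    natCast_choose_three_mul_add_one_three_mul, natCast_choose_three_mul_add_one_three_mul,
    natCast_choose_three_mul_add_one_three_mul_add_one,
    natCast_choose_three_mul_add_two_three_mul_add_one,
    natCast_choose_three_mul_add_one_three_mul_add_two, sq_three_mul_eq_zero]
  have key : ∀ a b : ZMod 9,
      (1 + 3 * b) ^ 4 + (1 + 3 * (a - b)) ^ 2 * (2 + 3 * (a + b)) ^ 2 = 5 := by decide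
  push_cast
  linear_combination ((m.choose j : ZMod 9) * (m + j).choose j) ^ 2 * key m j

theorem sum_aperyTerm_three_mul_add_two (m j : ℕ) :
    ∑ e ∈ range 3, (aperyTerm (3 * m + 2) (3 * j + e) : ZMod 9) = aperyTerm m j := by
  simp only [sum_range_succ, sum_range_zero, zero_add, add_zero, natCast_aperyTerm]
  rw [show 3 * m + 2 + 3 * j = 3 * (m + j) + 2 by ring,
    show 3 * m + 2 + (3 * j + 1) = 3 * (m + j + 1) + 0 by ring,
    show 3 * m + 2 + (3 * j + 2) = 3 * (m + j + 1) + 1 by ring,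
    natCast_choose_three_mul_add_two_three_mul, natCast_choose_three_mul_add_two_three_mul,
    add_zero, natCast_choose_three_mul_three_mul_add _ _ _ one_pos (by norm_num),
    natCast_choose_three_mul_add_one_three_mul_add_two, sq_three_mul_eq_zero,
    sq_three_mul_eq_zero]
  ring

theorem sum_aperyTerm_three_mul_add {d : ℕ} (hd : d ≤ 2) (m j : ℕ) :
    ∑ e ∈ range 3, (aperyTerm (3 * m + d) (3 * j + e) : ZMod 9) = apery d * aperyTerm m j := by
  interval_cases d
  · rw [add_zero, sum_aperyTerm_three_mul, show apery 0 = 1 by decide, Nat.cast_one, one_mul]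
  · rw [sum_aperyTerm_three_mul_add_one, show apery 1 = 5 by decide, Nat.cast_ofNat]
  · rw [sum_aperyTerm_three_mul_add_two, show apery 2 = 73 by decide, Nat.cast_ofNat,
      show (73 : ZMod 9) = 1 by decide, one_mul]

theorem apery_lucas_mod_nine (d : ℕ) (hd : d ≤ 2) (n : ℕ) :
    apery (d + 3 * n) ≡ apery d * apery n [MOD 9] := by
  rw [← ZMod.natCast_eq_natCast_iff, add_comm,
    apery_eq_sum_range (by omega : 3 * n + d < 3 * (n + 1)), sum_range_mul_eq_sum_sum,
    apery_eq_sum_range n.lt_add_one]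
  push_cast
  rw [mul_sum]
  exact sum_congr rfl fun j _ => sum_aperyTerm_three_mul_add hd n j
end

section
/- For every prime p ≥ 5 and all natural numbers a ≥ b, Jacobsthal's congruence holds: C(p·a, p·b) ≡ C(a, b) (mod p^3). -/
/-!
Splitting off the multiples of `p` gives `(p n)! = p ^ n * n ! * Q n`, where `Q n` is the product
of the blocks `(p j + 1) ⋯ (p j + p - 1)` for `j < n`; hence
`C(p a, p b) * Q b * Q (a - b) = C(a, b) * Q a`, and it suffices that every block is congruent to
`(p - 1)!` modulo `p ^ 3`. Write `p = 2 m + 1` and pair the factors `p j + i` and `p j + p - i`: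
the block becomes `∏_{1 ≤ i ≤ m} (i (p - i) + c)` with `c = p² j (j + 1)`. As `c² ≡ 0`, this is
`(p - 1)! + c * ∑_k ∏_{l ≠ k} l (p - l)`, and modulo `p` that sum is a multiple of
`∑_{1 ≤ k ≤ m} k⁻²`, which vanishes because `∑_{x ∈ 𝔽_p} x⁻² = ∑_{x ∈ 𝔽_p} x² = 0` for `p ≥ 5`.
-/

open Finset Nat

namespace Finset

theorem prod_range_two_mul_eq_prod_mul_reflect {M : Type*} [CommMonoid M] (f : ℕ → M) (m : ℕ) :
    ∏ k ∈ range (2 * m), f k = ∏ k ∈ range m, f k * f (2 * m - 1 - k) := by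
  rw [two_mul, prod_range_add, ← prod_range_reflect (fun j => f (m + j)) m, ← prod_mul_distrib]
  refine prod_congr rfl fun k hk => ?_
  rw [show m + (m - 1 - k) = m + m - 1 - k by have := mem_range.1 hk; omega]

theorem sum_range_two_mul_eq_sum_add_reflect {M : Type*} [AddCommMonoid M] (f : ℕ → M) (m : ℕ) :
    ∑ k ∈ range (2 * m), f k = ∑ k ∈ range m, (f k + f (2 * m - 1 - k)) :=
  @prod_range_two_mul_eq_prod_mul_reflect (Multiplicative M) _ f m

theorem prod_add_of_mul_self_eq_zero {R ι : Type*} [CommSemiring R] [DecidableEq ι] {c : R}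
    (hc : c * c = 0) (s : Finset ι) (f : ι → R) :
    ∏ i ∈ s, (f i + c) = ∏ i ∈ s, f i + c * ∑ i ∈ s, ∏ j ∈ s.erase i, f j := by
  induction s using Finset.induction_on with
  | empty => simp
  | @insert a s ha ih =>
    have hsum : ∑ i ∈ insert a s, ∏ j ∈ (insert a s).erase i, f j =
        ∏ j ∈ s, f j + f a * ∑ i ∈ s, ∏ j ∈ s.erase i, f j := by
      rw [sum_insert ha, erase_insert ha, mul_sum]
      refine congrArg _ (sum_congr rfl fun i hi => ?_)
      rw [erase_insert_of_ne (ne_of_mem_of_not_mem hi ha).symm,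
        prod_insert fun h => ha (mem_of_mem_erase h)]
    rw [prod_insert ha, ih, prod_insert ha, hsum, add_mul, mul_add, mul_add, ← mul_assoc c c, hc,
      zero_mul, add_zero]
    ring

theorem sum_prod_erase_eq_prod_mul_sum_inv {K ι : Type*} [Field K] [DecidableEq ι]
    {s : Finset ι} {f : ι → K} (hf : ∀ i ∈ s, f i ≠ 0) :
    ∑ i ∈ s, ∏ j ∈ s.erase i, f j = (∏ i ∈ s, f i) * ∑ i ∈ s, (f i)⁻¹ := by
  rw [mul_sum]
  exact sum_congr rfl fun i hi => (eq_mul_inv_iff_mul_eq₀ (hf i hi)).2 (prod_erase_mul s f hi)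

end Finset

theorem prod_range_two_mul_add_eq_prod_pairs {R : Type*} [CommRing R] (x : R) (m : ℕ) :
    ∏ i ∈ range (2 * m), (x + (i + 1)) =
      ∏ k ∈ range m, ((k + 1) * (2 * m - k) + x * (x + (2 * m + 1))) := by
  rw [prod_range_two_mul_eq_prod_mul_reflect]
  refine prod_congr rfl fun k hk => ?_
  rw [Nat.sub_sub, Nat.cast_sub (by have := mem_range.1 hk; omega : 1 + k ≤ 2 * m)]
  push_cast
  ring

theorem FiniteField.sum_inv_sq_eq_zero {K : Type*} [Field K] [Fintype K]
    (hK : 3 < Fintype.card K) : ∑ x : K, x⁻¹ ^ 2 = 0 :=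
  (Equiv.sum_comp (Equiv.inv K) (· ^ 2)).trans
    (FiniteField.sum_pow_lt_card_sub_one K 2 (by omega))

namespace ZMod

theorem sum_eq_sum_range {M : Type*} [AddCommMonoid M] (n : ℕ) [NeZero n]
    (f : ZMod n → M) : ∑ x, f x = ∑ k ∈ range n, f k :=
  sum_nbij' val Nat.cast (fun x _ => mem_range.2 x.val_lt) (fun _ _ => mem_univ _)
    (fun x _ => natCast_zmod_val x) (fun _ hk => val_cast_of_lt (mem_range.1 hk))
    (fun x _ => by rw [natCast_zmod_val])

theorem two_mul_add_one_eq_zero {p m : ℕ} (hm : p = 2 * m + 1) : (2 * m + 1 : ZMod p) = 0 := by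
  have h : ((2 * m + 1 : ℕ) : ZMod p) = 0 := by rw [← hm, natCast_self]
  exact_mod_cast h

theorem pow_mul_eq_zero_of_castHom_eq_zero {p k : ℕ} {z : ZMod (p ^ (k + 1))}
    (h : castHom (dvd_pow_self p k.succ_ne_zero) (ZMod p) z = 0) :
    (p : ZMod (p ^ (k + 1))) ^ k * z = 0 := by
  rw [← intCast_zmod_cast z] at h ⊢
  obtain ⟨t, ht⟩ := (intCast_zmod_eq_zero_iff_dvd _ p).1 (by rwa [map_intCast] at h)
  rw [ht]
  push_cast
  rw [← mul_assoc, ← pow_succ, ← Nat.cast_pow, natCast_self, zero_mul]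

variable {p m : ℕ} [Fact p.Prime]

theorem sum_range_inv_sq_eq_zero (hp5 : 5 ≤ p) (hm : p = 2 * m + 1) :
    ∑ k ∈ range m, ((k + 1 : ZMod p) ^ 2)⁻¹ = 0 := by
  have hfull : ∑ k ∈ range (2 * m), ((k + 1 : ZMod p) ^ 2)⁻¹ = 0 := by
    have h := FiniteField.sum_inv_sq_eq_zero (K := ZMod p) (by rw [ZMod.card]; omega)
    rw [sum_eq_sum_range, show range p = range (2 * m + 1) by rw [hm], sum_range_succ'] at h
    simpa using h
  have hp := two_mul_add_one_eq_zero hm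
  have hreflect : ∀ k < m, ((2 * m - 1 - k : ℕ) + 1 : ZMod p) = -(k + 1) := by
    intro k hk
    rw [Nat.sub_sub, Nat.cast_sub (by omega : 1 + k ≤ 2 * m)]
    push_cast
    linear_combination hp
  rw [sum_range_two_mul_eq_sum_add_reflect,
    sum_congr rfl fun k hk => by rw [hreflect k (mem_range.1 hk), neg_sq, ← two_mul], ← mul_sum]
    at hfull
  refine (mul_eq_zero.1 hfull).resolve_left fun h2 => one_ne_zero (α := ZMod p) ?_
  linear_combination hp - m * h2

theorem sum_prod_erase_eq_zero (hp5 : 5 ≤ p) (hm : p = 2 * m + 1) :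
    ∑ k ∈ range m, ∏ l ∈ (range m).erase k, ((l + 1) * (2 * m - l) : ZMod p) = 0 := by
  have hp := two_mul_add_one_eq_zero hm
  have hne : ∀ l ∈ range m, -(l + 1 : ZMod p) ^ 2 ≠ 0 := by
    intro l hl h
    have hdvd := (natCast_eq_zero_iff (l + 1) p).1 (by push_cast; simpa using h)
    have := Nat.le_of_dvd l.succ_pos hdvd
    have := mem_range.1 hl
    omega
  calc ∑ k ∈ range m, ∏ l ∈ (range m).erase k, ((l + 1) * (2 * m - l) : ZMod p)
      = ∑ k ∈ range m, ∏ l ∈ (range m).erase k, -(l + 1 : ZMod p) ^ 2 :=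
        sum_congr rfl fun k _ => prod_congr rfl fun l _ => by linear_combination (l + 1) * hp
    _ = -(∏ l ∈ range m, -(l + 1 : ZMod p) ^ 2) * ∑ k ∈ range m, ((k + 1 : ZMod p) ^ 2)⁻¹ := by
        simp only [sum_prod_erase_eq_prod_mul_sum_inv hne, inv_neg, sum_neg_distrib, mul_neg,
          neg_mul]
    _ = 0 := by rw [sum_range_inv_sq_eq_zero hp5 hm, mul_zero]

theorem prod_range_prime_mul_add_eq (hp5 : 5 ≤ p) (j : ZMod (p ^ 3)) :
    ∏ i ∈ range (p - 1), ((p : ZMod (p ^ 3)) * j + ((i : ZMod (p ^ 3)) + 1)) =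
      ∏ i ∈ range (p - 1), ((i : ZMod (p ^ 3)) + 1) := by
  obtain ⟨m, hm⟩ : Odd p := (Fact.out : p.Prime).odd_of_ne_two (by omega)
  have hp3 : (p : ZMod (p ^ 3)) ^ 3 = 0 := by rw [← Nat.cast_pow, natCast_self]
  have hc : (p * j : ZMod (p ^ 3)) * (p * j + (2 * m + 1)) = p ^ 2 * (j * (j + 1)) := by
    rw [show (2 * m + 1 : ZMod (p ^ 3)) = p by rw [hm]; push_cast; ring]
    ring
  have hcc : (p ^ 2 * (j * (j + 1)) : ZMod (p ^ 3)) * (p ^ 2 * (j * (j + 1))) = 0 := by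
    linear_combination (p * (j * (j + 1)) ^ 2) * hp3
  have hS : (p : ZMod (p ^ 3)) ^ 2 *
      ∑ k ∈ range m, ∏ l ∈ (range m).erase k, ((l + 1) * (2 * m - l) : ZMod (p ^ 3)) = 0 := by
    apply pow_mul_eq_zero_of_castHom_eq_zero
    simpa only [map_sum, map_prod, map_mul, map_sub, map_add, map_one, map_natCast, map_ofNat]
      using sum_prod_erase_eq_zero hp5 hm
  rw [show p - 1 = 2 * m by omega, prod_range_two_mul_add_eq_prod_pairs, hc,
    prod_add_of_mul_self_eq_zero hcc, mul_right_comm, hS, zero_mul, add_zero]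
  simpa using (prod_range_two_mul_add_eq_prod_pairs (0 : ZMod (p ^ 3)) m).symm

end ZMod

/-- The product of the integers in `[1, p n]` that are not multiples of `p`. -/
def nonMultipleFactorial (p n : ℕ) : ℕ :=
  ∏ j ∈ range n, (p * j + 1).ascFactorial (p - 1)

theorem factorial_mul_eq {p : ℕ} (hp : 0 < p) (n : ℕ) :
    (p * n)! = p ^ n * n ! * nonMultipleFactorial p n := by
  obtain ⟨q, rfl⟩ : ∃ q, p = q + 1 := ⟨p - 1, by omega⟩
  induction n with
  | zero => simp [nonMultipleFactorial]
  | succ n ih =>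
    rw [nonMultipleFactorial, prod_range_succ, ← nonMultipleFactorial, mul_add, mul_one,
      ← factorial_mul_ascFactorial, ih, ascFactorial_succ, factorial_succ, pow_succ,
      Nat.add_sub_cancel]
    ring

theorem choose_mul_mul_nonMultipleFactorial {p a b : ℕ} (hp : 0 < p) (hab : b ≤ a) :
    (p * a).choose (p * b) * nonMultipleFactorial p b * nonMultipleFactorial p (a - b) =
      a.choose b * nonMultipleFactorial p a := by
  have h := choose_mul_factorial_mul_factorial (Nat.mul_le_mul_left p hab)
  have hpow : p ^ a = p ^ b * p ^ (a - b) := by rw [← pow_add, Nat.add_sub_cancel' hab]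
  rw [← Nat.mul_sub, factorial_mul_eq hp, factorial_mul_eq hp, factorial_mul_eq hp,
    ← choose_mul_factorial_mul_factorial hab, hpow] at h
  refine Nat.eq_of_mul_eq_mul_left (show 0 < p ^ b * p ^ (a - b) * b ! * (a - b)! by positivity) ?_
  linear_combination h

theorem nonMultipleFactorial_cast {p : ℕ} [Fact p.Prime] (hp5 : 5 ≤ p) (n : ℕ) :
    (nonMultipleFactorial p n : ZMod (p ^ 3)) = ((p - 1)! : ZMod (p ^ 3)) ^ n := by
  rw [nonMultipleFactorial, Nat.cast_prod, ← card_range n, ← prod_const, card_range]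
  refine prod_congr rfl fun j _ => ?_
  rw [ascFactorial_eq_prod_range, ← prod_range_add_one_eq_factorial]
  push_cast
  simpa only [add_assoc, add_comm (1 : ZMod (p ^ 3))] using
    ZMod.prod_range_prime_mul_add_eq hp5 (j : ZMod (p ^ 3))

theorem jacobsthal_congruence (p : ℕ) (hp : p.Prime) (hp5 : 5 ≤ p) (a b : ℕ) (hab : b ≤ a) :
    (p * a).choose (p * b) ≡ a.choose b [MOD p ^ 3] := by
  have := Fact.mk hp
  have hunit : IsUnit ((p - 1)! : ZMod (p ^ 3)) := by
    rw [ZMod.isUnit_iff_coprime]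
    refine Nat.Coprime.pow_right 3 (Nat.Coprime.symm (hp.coprime_iff_not_dvd.2 fun h => ?_))
    rw [hp.dvd_factorial] at h
    omega
  have h := congrArg (Nat.cast : ℕ → ZMod (p ^ 3))
    (choose_mul_mul_nonMultipleFactorial hp.pos hab)
  push_cast [nonMultipleFactorial_cast hp5] at h
  rw [mul_assoc, ← pow_add, Nat.add_sub_cancel' hab] at h
  exact (ZMod.natCast_eq_natCast_iff _ _ _).1 ((hunit.pow a).mul_left_injective h)
end
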